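/- The identity σ(τ) := T̂_A(τ) − T̂_B(τ) = (3−τ)√((8τ²−9/2)² − 45/4)/(18−9τ²) holds, and σ is monotonically increasing on [√(9+3√5)/4, 1], with σ(√(9+3√5)/4) = 0 and σ(1) = 2/9; in particular σ(0.991) > 0.02. -/

import Mathlib

/-! On `[3/4, 1]` the gap `σ τ = (3 - τ) / (18 - 9τ²) · √((8τ² - 9/2)² - 45/4)` is a product of two
nonnegative increasing factors, hence increasing. The left endpoint `τ₀ = √(9 + 3√5)/4` lies in
`[3/4, 1]` and satisfies `8τ₀² - 9/2 = 3√5/2`, so the discriminant vanishes there and `σ τ₀ = 0`. -/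

noncomputable def hatTA (τ : ℝ) : ℝ :=
  ((3 - τ) / 2) *
    (((27 - 8 * τ ^ 2) + Real.sqrt ((8 * τ ^ 2 - 9 / 2) ^ 2 - 45 / 4)) /
      (18 - 9 * τ ^ 2))

noncomputable def hatTB (τ : ℝ) : ℝ :=
  ((3 - τ) / 2) *
    (((27 - 8 * τ ^ 2) - Real.sqrt ((8 * τ ^ 2 - 9 / 2) ^ 2 - 45 / 4)) /
      (18 - 9 * τ ^ 2))

noncomputable def σ (τ : ℝ) : ℝ := hatTA τ - hatTB τ

open Set

lemma sigma_eq (τ : ℝ) :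
    σ τ = (3 - τ) * Real.sqrt ((8 * τ ^ 2 - 9 / 2) ^ 2 - 45 / 4) / (18 - 9 * τ ^ 2) := by
  unfold σ hatTA hatTB
  ring

lemma sigma_eq_mul_sqrt :
    σ = (fun τ : ℝ => (3 - τ) / (18 - 9 * τ ^ 2)) *
      fun τ : ℝ => Real.sqrt ((8 * τ ^ 2 - 9 / 2) ^ 2 - 45 / 4) := by
  funext τ
  rw [sigma_eq, Pi.mul_apply]
  ring

lemma monotoneOn_prefactor :
    MonotoneOn (fun τ : ℝ => (3 - τ) / (18 - 9 * τ ^ 2)) (Icc (1 / 2) 1) := by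
  rintro a ⟨ha₁, ha₂⟩ b ⟨hb₁, hb₂⟩ hab
  rw [div_le_div_iff₀ (by nlinarith) (by nlinarith)]
  -- the difference of the two sides is `9 (b - a) (3 (a + b) - a b - 2)`
  nlinarith [mul_nonneg (sub_nonneg.2 hab) (show (0 : ℝ) ≤ 3 * (a + b) - a * b - 2 by nlinarith)]

lemma monotoneOn_sqrt_discriminant :
    MonotoneOn (fun τ : ℝ => Real.sqrt ((8 * τ ^ 2 - 9 / 2) ^ 2 - 45 / 4)) (Ici (3 / 4)) := by
  rintro a ha b - hab
  simp only [mem_Ici] at ha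
  apply Real.sqrt_le_sqrt
  -- the difference of the two discriminants is `8 (b² - a²) (8a² + 8b² - 9)`
  nlinarith [mul_nonneg (mul_nonneg (sub_nonneg.2 hab) (show (0 : ℝ) ≤ a + b by linarith))
    (show (0 : ℝ) ≤ 8 * a ^ 2 + 8 * b ^ 2 - 9 by nlinarith)]

lemma monotoneOn_sigma : MonotoneOn σ (Icc (3 / 4) 1) := by
  rw [sigma_eq_mul_sqrt]
  refine MonotoneOn.mul (monotoneOn_prefactor.mono (Icc_subset_Icc (by norm_num) le_rfl))
    (monotoneOn_sqrt_discriminant.mono Icc_subset_Ici_self) ?_ (fun _ _ => Real.sqrt_nonneg _)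
  rintro τ ⟨h₁, h₂⟩
  exact div_nonneg (by linarith) (by nlinarith)

lemma sq_sqrt_nine_add_three_sqrt_five_div_four :
    (Real.sqrt (9 + 3 * Real.sqrt 5) / 4) ^ 2 = (9 + 3 * Real.sqrt 5) / 16 := by
  rw [div_pow, Real.sq_sqrt (by positivity)]
  norm_num

lemma sqrt_nine_add_three_sqrt_five_div_four_mem_Icc :
    Real.sqrt (9 + 3 * Real.sqrt 5) / 4 ∈ Icc (3 / 4) 1 := by
  have h₀ : 0 ≤ Real.sqrt (9 + 3 * Real.sqrt 5) / 4 := by positivity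
  have hsq := sq_sqrt_nine_add_three_sqrt_five_div_four
  have h₅ : Real.sqrt 5 ≤ 7 / 3 := Real.sqrt_le_iff.2 ⟨by norm_num, by norm_num⟩
  constructor <;> nlinarith [Real.sqrt_nonneg 5]

lemma sigma_sqrt_nine_add_three_sqrt_five_div_four :
    σ (Real.sqrt (9 + 3 * Real.sqrt 5) / 4) = 0 := by
  have hdisc : (8 * (Real.sqrt (9 + 3 * Real.sqrt 5) / 4) ^ 2 - 9 / 2) ^ 2 - 45 / 4 = 0 := by
    rw [sq_sqrt_nine_add_three_sqrt_five_div_four]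
    nlinarith [Real.sq_sqrt (show (0 : ℝ) ≤ 5 by norm_num)]
  rw [sigma_eq, hdisc, Real.sqrt_zero, mul_zero, zero_div]

lemma sigma_one : σ 1 = 2 / 9 := by
  rw [sigma_eq]
  norm_num

lemma sigma_0_991_gt : σ 0.991 > 0.02 := by
  have hsqrt : (0.1 : ℝ) < Real.sqrt ((8 * (0.991 : ℝ) ^ 2 - 9 / 2) ^ 2 - 45 / 4) :=
    Real.lt_sqrt (by norm_num) |>.2 (by norm_num)
  rw [sigma_eq, gt_iff_lt, lt_div_iff₀ (by norm_num)]
  linarith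

/-- `σ(τ) = (3−τ)√((8τ²−9/2)²−45/4)/(18−9τ²)`, `σ` is monotonically increasing on
`[√(9+3√5)/4, 1]`, `σ(√(9+3√5)/4) = 0`, `σ(1) = 2/9`, and `σ(0.991) > 0.02`. -/
theorem stmt_19 :
    (∀ τ : ℝ, Real.sqrt (9 + 3 * Real.sqrt 5) / 4 ≤ τ → τ ≤ 1 →
      σ τ = (3 - τ) * Real.sqrt ((8 * τ ^ 2 - 9 / 2) ^ 2 - 45 / 4) /
        (18 - 9 * τ ^ 2)) ∧
    MonotoneOn σ (Set.Icc (Real.sqrt (9 + 3 * Real.sqrt 5) / 4) 1) ∧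
    σ (Real.sqrt (9 + 3 * Real.sqrt 5) / 4) = 0 ∧
    σ 1 = 2 / 9 ∧
    σ 0.991 > 0.02 :=
  ⟨fun τ _ _ => sigma_eq τ,
    monotoneOn_sigma.mono (Icc_subset_Icc sqrt_nine_add_three_sqrt_five_div_four_mem_Icc.1 le_rfl),
    sigma_sqrt_nine_add_three_sqrt_five_div_four, sigma_one, sigma_0_991_gt⟩
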